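/- arXiv:2209.00811 — 2 statements merged into one kernel-verified Lean document; each statement's English description precedes it below -/
import Mathlib

section
/- (Case i<0, j>0.) Assume t_{−i,−a} = t_{ia} for all i ∈ I_{r|r} and a ∈ I_{n|n}, and assume relation (II) holds for all 1 ≤ i,j ≤ r and a,b ∈ I_{n|n}. Then relation (I) holds for all i,j ∈ I_{r|r} with i < 0 < j and all a,b ∈ I_{n|n}. -/
open scoped BigOperators

set_option synthInstance.maxHeartbeats 400000
set_option maxHeartbeats 1000000

noncomputable section

/-- The base field `K = ℂ(q)`. -/
abbrev K : Type := RatFunc ℂ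

/-- The indeterminate `q ∈ ℂ(q)`. -/
noncomputable def q : K := RatFunc.X

/-- `ξ = q - q⁻¹`. -/
noncomputable def ξ : K := q - q⁻¹

/-- Parity: `p(i) = 0` if `i > 0`, and `p(i) = 1` if `i < 0`. -/
def p (i : ℤ) : ℕ := if 0 < i then 0 else 1

/-- `φ(i,j) = (-1)^{p(j)} (δ_{i,j} + δ_{i,-j})`. -/
def φ (i j : ℤ) : ℤ :=
  (if 0 < j then 1 else -1) * ((if i = j then 1 else 0) + (if i = -j then 1 else 0))

/-- Indicator of a (decidable) proposition, as an element of `K`. -/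
def ind (P : Prop) [Decidable P] : K := if P then 1 else 0

/-- Membership in the index set `I_{m|m} = {-m, …, -1, 1, …, m} ⊆ ℤ`. -/
def Idx (m : ℕ) (i : ℤ) : Prop := i ≠ 0 ∧ |i| ≤ (m : ℤ)

section Relations

variable {A : Type*} [Ring A] [Algebra K A]

/-- Relation (I), for indices `i, j ∈ I_{r|r}` and `a, b ∈ I_{n|n}`:
`(-1)^{p(i)p(j)+p(j)p(b)+p(b)p(i)} ( q^{φ(i,j)} t_{ia} t_{jb}
  − (-1)^{(p(i)+p(a))(p(j)+p(b))} q^{φ(a,b)} t_{jb} t_{ia} )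
 = ξ (δ_{a<b} − δ_{j<i}) t_{ja} t_{ib}
   + (-1)^{p(j)+p(b)} ξ (δ_{−a<b} − δ_{j<−i}) t_{j,−a} t_{i,−b}`. -/
def RelI (t : ℤ → ℤ → A) (i j a b : ℤ) : Prop :=
  ((-1 : K) ^ (p i * p j + p j * p b + p b * p i)) •
      ((q ^ φ i j) • (t i a * t j b)
        - (((-1 : K) ^ ((p i + p a) * (p j + p b))) * q ^ φ a b) • (t j b * t i a))
  = (ξ * (ind (a < b) - ind (j < i))) • (t j a * t i b)
    + (((-1 : K) ^ (p j + p b)) * ξ * (ind (-a < b) - ind (j < -i))) •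
        (t j (-a) * t i (-b))

/-- Relation (II), for indices `1 ≤ i, j ≤ r` and `a, b ∈ I_{n|n}`:
`q^{δ_{ij}} t_{ia} t_{jb} − (-1)^{p(a)p(b)} q^{φ(a,b)} t_{jb} t_{ia}
 = ξ (δ_{a<b} − δ_{j<i}) t_{ja} t_{ib} + (-1)^{p(b)} ξ δ_{−a<b} t_{j,−a} t_{i,−b}`. -/
def RelII (t : ℤ → ℤ → A) (i j a b : ℤ) : Prop :=
  (q ^ (if i = j then 1 else 0 : ℕ)) • (t i a * t j b)
      - (((-1 : K) ^ (p a * p b)) * q ^ φ a b) • (t j b * t i a)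
  = (ξ * (ind (a < b) - ind (j < i))) • (t j a * t i b)
    + (((-1 : K) ^ p b) * ξ * ind (-a < b)) • (t j (-a) * t i (-b))

end Relations

lemma Idx.neg {m : ℕ} {x : ℤ} (hx : Idx m x) : Idx m (-x) :=
  ⟨neg_ne_zero.2 hx.1, by rw [abs_neg]; exact hx.2⟩

lemma p_of_neg {i : ℤ} (hi : i < 0) : p i = 1 := if_neg hi.not_gt

lemma p_of_pos {i : ℤ} (hi : 0 < i) : p i = 0 := if_pos hi

lemma neg_one_pow_p_neg_mul {a : ℤ} (ha : a ≠ 0) (m : ℕ) :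
    (-1 : K) ^ (p (-a) * m) = (-1) ^ ((1 + p a) * m) := by
  unfold p
  split_ifs <;> first | omega | simp [pow_mul]

lemma φ_neg_left (a b : ℤ) : φ (-a) b = φ a b := by
  unfold φ
  split_ifs <;> omega

lemma q_zpow_φ_of_neg_of_pos {i j : ℤ} (hi : i < 0) (hj : 0 < j) :
    q ^ φ i j = q ^ (if -i = j then 1 else 0 : ℕ) := by
  unfold φ
  split_ifs <;> first | omega | simp

/-- Relation (I) here is `(-1)^{p(b)}` times relation (II) at `(-i, j, -a, b)`, rewritten in row `i`. -/
lemma relI_of_relII_neg_of_pos {A : Type*} [Ring A] [Algebra K A] {t : ℤ → ℤ → A}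
    {i j a b : ℤ} (hi : i < 0) (hj : 0 < j) (ha : a ≠ 0)
    (hta : t i a = t (-i) (-a)) (htb : t i b = t (-i) (-b)) (htb' : t i (-b) = t (-i) b)
    (H : RelII t (-i) j (-a) b) : RelI t i j a b := by
  unfold RelII at H
  unfold RelI
  have hji : ind (j < i) = 0 := if_neg (by omega)
  rw [neg_neg, φ_neg_left, neg_one_pow_p_neg_mul ha] at H
  rw [hta, htb, htb', p_of_neg hi, p_of_pos hj, q_zpow_φ_of_neg_of_pos hi hj, hji]
  simp only [one_mul, zero_mul, mul_one, zero_add, add_zero, sub_zero]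
  have hsq : (-1 : K) ^ p b * (-1) ^ p b = 1 := by rw [← mul_pow]; norm_num
  rw [H, smul_add, smul_smul, smul_smul, add_comm]
  congr 2
  · linear_combination (ξ * ind (a < b)) * hsq
  · ring

theorem relII_implies_relI_neg_pos_general (r n : ℕ)
    (A : Type*) [Ring A] [Algebra K A] (t : ℤ → ℤ → A)
    (hsym : ∀ i a, Idx r i → Idx n a → t (-i) (-a) = t i a)
    (hII : ∀ i j a b, 1 ≤ i → i ≤ (r : ℤ) → 1 ≤ j → j ≤ (r : ℤ) →
      Idx n a → Idx n b → RelII t i j a b) :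
    ∀ i j a b, Idx r i → Idx r j → i < 0 → 0 < j →
      Idx n a → Idx n b → RelI t i j a b := by
  intro i j a b hi hj hineg hjpos ha hb
  have hir : -i ≤ r := by simpa [abs_of_neg hineg] using hi.2
  have hjr : j ≤ r := by simpa [abs_of_pos hjpos] using hj.2
  refine relI_of_relII_neg_of_pos hineg hjpos ha.1 (hsym i a hi ha).symm (hsym i b hi hb).symm
    ?_ (hII (-i) j (-a) b (by omega) hir (by omega) hjr (ha.neg) hb)
  simpa using (hsym i (-b) hi (hb.neg)).symm

/-- (Case `i < 0 < j`.) Assume `t_{−i,−a} = t_{ia}` for all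
`i ∈ I_{r|r}`, `a ∈ I_{n|n}`, and assume relation (II) holds for all
`1 ≤ i, j ≤ r` and `a, b ∈ I_{n|n}`. Then relation (I) holds for all
`i, j ∈ I_{r|r}` with `i < 0 < j` and all `a, b ∈ I_{n|n}`. -/
theorem relII_implies_relI_neg_pos (r n : ℕ) (hr : 0 < r) (hn : 0 < n)
    (A : Type*) [Ring A] [Algebra K A] (t : ℤ → ℤ → A)
    (hsym : ∀ i a, Idx r i → Idx n a → t (-i) (-a) = t i a)
    (hII : ∀ i j a b, 1 ≤ i → i ≤ (r : ℤ) → 1 ≤ j → j ≤ (r : ℤ) →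
      Idx n a → Idx n b → RelII t i j a b) :
    ∀ i j a b, Idx r i → Idx r j → i < 0 → 0 < j →
      Idx n a → Idx n b → RelI t i j a b :=
  relII_implies_relI_neg_pos_general r n A t hsym hII

end
end

section
/- (Case i<0, j<0.) Assume t_{−i,−a} = t_{ia} for all i ∈ I_{r|r} and a ∈ I_{n|n}, and assume relation (II) holds for all 1 ≤ i,j ≤ r and a,b ∈ I_{n|n}. Then relation (I) holds for all i,j ∈ I_{r|r} with i < 0 and j < 0 and all a,b ∈ I_{n|n}. -/
open scoped BigOperators

set_option synthInstance.maxHeartbeats 400000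
set_option maxHeartbeats 1000000

noncomputable section

/-! For `i, j < 0`, relation (II) at the positive indices `(-i, -j, -a, -b)`, rewritten with
`t_{-k,-c} = t_{kc}`, is relation (I) at `(i, j, a, b)` multiplied by `-1`: the parities of `-a`
and `-b` are complementary to those of `a` and `b`, `φ(-a,-b) = -φ(a,b)`, and the indicators of
the two relations match through `δ_{x<y} = 1 - δ_{y<x}` for `x ≠ y`. In the degenerate cases
`i = j`, `a = b` and `b = -a` some monomials of the relations coincide and their coefficients are
compared after collecting terms. -/

theorem p_eq_zero {i : ℤ} (h : 0 < i) : p i = 0 := if_pos h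

theorem p_eq_one {i : ℤ} (h : i ≤ 0) : p i = 1 := if_neg h.not_gt

theorem φ_eq_zero {a b : ℤ} (h₁ : a ≠ b) (h₂ : a ≠ -b) : φ a b = 0 := by
  simp [φ, h₁, h₂]

theorem φ_eq_one {a b : ℤ} (hb : 0 < b) (h : a = b ∨ a = -b) : φ a b = 1 := by
  rcases h with rfl | rfl <;> simp [φ, hb] <;> omega

theorem φ_eq_neg_one {a b : ℤ} (hb : b < 0) (h : a = b ∨ a = -b) : φ a b = -1 := by
  rcases h with rfl | rfl <;> simp [φ, hb.not_gt] <;> omega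

theorem φ_neg_neg (a : ℤ) {b : ℤ} (hb : b ≠ 0) : φ (-a) (-b) = -φ a b := by
  rcases hb.lt_or_gt with hb | hb <;> simp [φ, hb, hb.not_gt] <;> omega

theorem ind_eq_one {P : Prop} [Decidable P] (h : P) : ind P = 1 := if_pos h

theorem ind_eq_zero {P : Prop} [Decidable P] (h : ¬P) : ind P = 0 := if_neg h

theorem ind_congr {P Q : Prop} [Decidable P] [Decidable Q] (h : P ↔ Q) : ind P = ind Q := by
  simp only [ind, h]

theorem ind_lt_eq_one_sub {a b : ℤ} (h : a ≠ b) : ind (a < b) = 1 - ind (b < a) := by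
  rcases h.lt_or_gt with h | h <;> simp [ind, h, h.not_gt]

theorem Idx.neg_s7 {m : ℕ} {i : ℤ} (h : Idx m i) : Idx m (-i) :=
  ⟨neg_ne_zero.mpr h.1, (abs_neg i).trans_le h.2⟩

section

/- `RatFunc` carries its own `Algebra ℕ` and `Algebra ℤ` instances, which are not reducibly
defeq to the canonical ones; `match_scalars` (behind `linear_combination (norm := module)`)
fails over `K` unless the canonical ones are found first. -/
attribute [local instance high] Semiring.toNatAlgebra Ring.toIntAlgebra

variable {A : Type*} [Ring A] [Algebra K A]

theorem relI_of_relII_neg_neg {r n : ℕ} {t : ℤ → ℤ → A}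
    (hsym : ∀ i a, Idx r i → Idx n a → t (-i) (-a) = t i a) {i j a b : ℤ}
    (hi : Idx r i) (hj : Idx r j) (hi₀ : i < 0) (hj₀ : j < 0) (ha : Idx n a) (hb : Idx n b)
    (h : RelII t (-i) (-j) (-a) (-b)) : RelI t i j a b := by
  rw [RelII, hsym i a hi ha, hsym j b hj hb, hsym j a hj ha, hsym i b hi hb,
    hsym j (-a) hj ha.neg_s7, hsym i (-b) hi hb.neg_s7, φ_neg_neg a hb.1] at h
  simp only [neg_neg, neg_inj, neg_lt_neg_iff] at h
  rw [RelI, p_eq_one hi₀.le, p_eq_one hj₀.le, ind_eq_one (show j < -i by omega)]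
  obtain ⟨hab, hab'⟩ | rfl | rfl : (a ≠ b ∧ a ≠ -b) ∨ a = b ∨ b = -a := by omega
  on_goal 1 => rw [ind_lt_eq_one_sub hab, ind_congr neg_lt, ind_lt_eq_one_sub (Ne.symm hab')]
  all_goals
    rcases lt_trichotomy i j with hij | rfl | hij <;>
    rcases ha.1.lt_or_gt with ha₀ | ha₀ <;> rcases hb.1.lt_or_gt with hb₀ | hb₀ <;>
    first
    | omega
    | simp (disch := omega) only [p_eq_zero, p_eq_one, φ_eq_zero, φ_eq_one, φ_eq_neg_one,
        ind_eq_one, ind_eq_zero, if_neg, ↓reduceIte, ξ, zpow_zero, zpow_neg, zpow_one, neg_zero,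
        neg_neg] at h ⊢
      linear_combination (norm := module) (-1 : K) • h

end

theorem relII_implies_relI_neg_neg_general (r n : ℕ)
    (A : Type*) [Ring A] [Algebra K A] (t : ℤ → ℤ → A)
    (hsym : ∀ i a, Idx r i → Idx n a → t (-i) (-a) = t i a)
    (hII : ∀ i j a b, 1 ≤ i → i ≤ (r : ℤ) → 1 ≤ j → j ≤ (r : ℤ) →
      Idx n a → Idx n b → RelII t i j a b) :
    ∀ i j a b, Idx r i → Idx r j → i < 0 → j < 0 →
      Idx n a → Idx n b → RelI t i j a b := by
  intro i j a b hi hj hi₀ hj₀ ha hb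
  have hir := abs_le.mp hi.2
  have hjr := abs_le.mp hj.2
  exact relI_of_relII_neg_neg hsym hi hj hi₀ hj₀ ha hb
    (hII (-i) (-j) (-a) (-b) (by omega) (by omega) (by omega) (by omega) ha.neg_s7 hb.neg_s7)

/-- (Case `i < 0`, `j < 0`.) Assume `t_{−i,−a} = t_{ia}` for
all `i ∈ I_{r|r}`, `a ∈ I_{n|n}`, and assume relation (II) holds for all
`1 ≤ i, j ≤ r` and `a, b ∈ I_{n|n}`. Then relation (I) holds for all
`i, j ∈ I_{r|r}` with `i < 0` and `j < 0` and all `a, b ∈ I_{n|n}`. -/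
theorem relII_implies_relI_neg_neg (r n : ℕ) (hr : 0 < r) (hn : 0 < n)
    (A : Type*) [Ring A] [Algebra K A] (t : ℤ → ℤ → A)
    (hsym : ∀ i a, Idx r i → Idx n a → t (-i) (-a) = t i a)
    (hII : ∀ i j a b, 1 ≤ i → i ≤ (r : ℤ) → 1 ≤ j → j ≤ (r : ℤ) →
      Idx n a → Idx n b → RelII t i j a b) :
    ∀ i j a b, Idx r i → Idx r j → i < 0 → j < 0 →
      Idx n a → Idx n b → RelI t i j a b :=
  relII_implies_relI_neg_neg_general r n A t hsym hII

end
end
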